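/- Let L = Log(𝓕_L) be a tabular quasi-normal modal logic, where 𝓕_L = {(F_1,0),…,(F_n,0)} is a reduced finite set of finite rooted frames (reduced means Log({(F_i,0)}) ⊄ Log({(F_j,0)}) and Log({(F_i,0)}) ⊉ Log({(F_j,0)}) whenever i ≠ j, i.e. Log({(F_i,0)}) ⊈ Log({(F_j,0)}) for i ≠ j). Then the following are equivalent: (1) L has the Craig interpolation property; (2) for every signature σ: whenever M,0 ∼_σ N,0 for a model M based on F_i and a model N based on F_j, the σ-reducts of (M,0) and (N,0) are isomorphic (in particular i = j). -/

import Mathlib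

inductive MForm (α : Type) : Type
  | top : MForm α
  | atom : α → MForm α
  | neg : MForm α → MForm α
  | and : MForm α → MForm α → MForm α
  | box : MForm α → MForm α
deriving DecidableEq

namespace MForm

def imp {α : Type} (φ ψ : MForm α) : MForm α := neg (and φ (neg ψ))

def dia {α : Type} (φ : MForm α) : MForm α := neg (box (neg φ))

def sig {α : Type} [DecidableEq α] : MForm α → Finset α
  | top => ∅
  | atom p => {p}
  | neg φ => sig φ
  | and φ ψ => sig φ ∪ sig ψ
  | box φ => sig φ

def IsProp {α : Type} : MForm α → Prop
  | top => True
  | atom _ => True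
  | neg φ => IsProp φ
  | and φ ψ => IsProp φ ∧ IsProp ψ
  | box _ => False

def subf {α : Type} [DecidableEq α] : MForm α → Finset (MForm α)
  | top => {top}
  | atom p => {atom p}
  | neg φ => insert (neg φ) (subf φ)
  | and φ ψ => insert (and φ ψ) (subf φ ∪ subf ψ)
  | box φ => insert (box φ) (subf φ)

/-- The dag-size of a formula: the number of its distinct subformulas. -/
def dagSize {α : Type} [DecidableEq α] (φ : MForm α) : ℕ := (subf φ).card

end MForm

def psat {α : Type} (v : α → Prop) : MForm α → Prop
  | .top => True
  | .atom p => v p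
  | .neg φ => ¬ psat v φ
  | .and φ ψ => psat v φ ∧ psat v ψ
  | .box _ => True

/-- Propositional tautology. -/
def PTaut {α : Type} (φ : MForm α) : Prop := ∀ v : α → Prop, psat v φ

def bigAnd {α : Type} : List (MForm α) → MForm α
  | [] => .top
  | φ :: l => .and φ (bigAnd l)

def bigOr {α : Type} (l : List (MForm α)) : MForm α := .neg (bigAnd (l.map .neg))

def boxIter {α : Type} : ℕ → MForm α → MForm α
  | 0, φ => φ
  | n + 1, φ => .box (boxIter n φ)

def diaIter {α : Type} : ℕ → MForm α → MForm α
  | 0, φ => φ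
  | n + 1, φ => MForm.dia (diaIter n φ)

/-- `□^{≤n} φ`. -/
def ble {α : Type} (n : ℕ) (φ : MForm α) : MForm α :=
  bigAnd ((List.range (n + 1)).map (fun k => boxIter k φ))

/-- `◇^{≤n} φ`. -/
def dle {α : Type} (n : ℕ) (φ : MForm α) : MForm α := .neg (ble n (.neg φ))

def substAtoms {α β : Type} (s : α → MForm β) : MForm α → MForm β
  | .top => .top
  | .atom a => s a
  | .neg φ => .neg (substAtoms s φ)
  | .and φ ψ => .and (substAtoms s φ) (substAtoms s ψ)
  | .box φ => .box (substAtoms s φ)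


/-- A finite rooted (pointed) frame. -/
structure FFrame where
  W : Type
  fin : Fintype W
  deq : DecidableEq W
  R : W → W → Prop
  root : W
  rooted : ∀ w, Relation.ReflTransGen R root w

attribute [instance] FFrame.fin FFrame.deq

def sat (F : FFrame) (V : F.W → ℕ → Prop) : F.W → MForm ℕ → Prop
  | _, .top => True
  | w, .atom p => V w p
  | w, .neg φ => ¬ sat F V w φ
  | w, .and φ ψ => sat F V w φ ∧ sat F V w ψ
  | w, .box φ => ∀ v, F.R w v → sat F V v φ

/-- The logic determined by a (finite) family of finite rooted frames. -/
def Log {ι : Type} (Fr : ι → FFrame) : Set (MForm ℕ) :=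
  {φ | ∀ i, ∀ V : (Fr i).W → ℕ → Prop, sat (Fr i) V (Fr i).root φ}

def StrImp (L : Set (MForm ℕ)) (σ : Finset ℕ) (φ χ : MForm ℕ) : Prop :=
  χ.sig ⊆ σ ∧ φ.imp χ ∈ L ∧
    ∀ ψ : MForm ℕ, ψ.sig ⊆ σ → φ.imp ψ ∈ L → χ.imp ψ ∈ L

def CraigInt (L : Set (MForm ℕ)) (φ ψ χ : MForm ℕ) : Prop :=
  φ.imp χ ∈ L ∧ χ.imp ψ ∈ L ∧ χ.sig ⊆ φ.sig ∩ ψ.sig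

def HasCIP (L : Set (MForm ℕ)) : Prop :=
  ∀ φ ψ : MForm ℕ, φ.imp ψ ∈ L → ∃ χ, CraigInt L φ ψ χ

def IsBisim (σ : Finset ℕ) (F₁ : FFrame) (V₁ : F₁.W → ℕ → Prop)
    (F₂ : FFrame) (V₂ : F₂.W → ℕ → Prop) (Z : F₁.W → F₂.W → Prop) : Prop :=
  (∀ w₁ w₂, Z w₁ w₂ → ∀ p ∈ σ, (V₁ w₁ p ↔ V₂ w₂ p)) ∧
  (∀ w₁ w₂ v₁, Z w₁ w₂ → F₁.R w₁ v₁ → ∃ v₂, F₂.R w₂ v₂ ∧ Z v₁ v₂) ∧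
  (∀ w₁ w₂ v₂, Z w₁ w₂ → F₂.R w₂ v₂ → ∃ v₁, F₁.R w₁ v₁ ∧ Z v₁ v₂)

def Bisim (σ : Finset ℕ) (F₁ : FFrame) (V₁ : F₁.W → ℕ → Prop) (w₁ : F₁.W)
    (F₂ : FFrame) (V₂ : F₂.W → ℕ → Prop) (w₂ : F₂.W) : Prop :=
  ∃ Z, IsBisim σ F₁ V₁ F₂ V₂ Z ∧ Z w₁ w₂

def IsEME (σ : Finset ℕ) (Φ : Finset (MForm ℕ)) : Prop :=
  (∀ φ ∈ Φ, φ.IsProp ∧ φ.sig ⊆ σ) ∧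
  (∀ v : ℕ → Prop, ∃ φ ∈ Φ, psat v φ) ∧
  (∀ φ ∈ Φ, ∀ ψ ∈ Φ, φ ≠ ψ → ∀ v : ℕ → Prop, ¬ (psat v φ ∧ psat v ψ))

def IsCover (σ : Finset ℕ) (Φ : Finset (MForm ℕ)) (F : FFrame) (V : F.W → ℕ → Prop) : Prop :=
  ∀ φ ∈ Φ, ∀ w₁ w₂, sat F V w₁ φ → sat F V w₂ φ →
    ∀ χ : MForm ℕ, χ.IsProp → χ.sig ⊆ σ → (sat F V w₁ χ ↔ sat F V w₂ χ)

noncomputable def coverFml (σ : Finset ℕ) (Φ : Finset (MForm ℕ)) (N : ℕ) : MForm ℕ :=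
  bigAnd (Φ.toList.map (fun φ => bigAnd (σ.toList.map (fun p =>
    MForm.imp (dle N (.and φ (.atom p))) (ble N (MForm.imp φ (.atom p)))))))

/-- Satisfaction of `ML(Φ)`-formulas on abstract Φ-models `(F,f)`. -/
def asat (F : FFrame) (f : F.W → MForm ℕ) : F.W → MForm (MForm ℕ) → Prop
  | _, .top => True
  | w, .atom φ => f w = φ
  | w, .neg δ => ¬ asat F f w δ
  | w, .and δ₁ δ₂ => asat F f w δ₁ ∧ asat F f w δ₂
  | w, .box δ => ∀ v, F.R w v → asat F f v δ

def AbsBisim (F₁ : FFrame) (f₁ : F₁.W → MForm ℕ)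
    (F₂ : FFrame) (f₂ : F₂.W → MForm ℕ) (Z : F₁.W → F₂.W → Prop) : Prop :=
  (∀ w₁ w₂, Z w₁ w₂ → f₁ w₁ = f₂ w₂) ∧
  (∀ w₁ w₂ v₁, Z w₁ w₂ → F₁.R w₁ v₁ → ∃ v₂, F₂.R w₂ v₂ ∧ Z v₁ v₂) ∧
  (∀ w₁ w₂ v₂, Z w₁ w₂ → F₂.R w₂ v₂ → ∃ v₁, F₁.R w₁ v₁ ∧ Z v₁ v₂)

/-- Abstract Φ-bisimilarity of the roots of two abstract Φ-models. -/
def ABisimRoot (F₁ : FFrame) (f₁ : F₁.W → MForm ℕ) (F₂ : FFrame) (f₂ : F₂.W → MForm ℕ) : Prop :=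
  ∃ Z, AbsBisim F₁ f₁ F₂ f₂ Z ∧ Z F₁.root F₂.root

/-- Viewing a formula of `ML(Φ)` as a modal formula (atoms of `Φ` are formulas). -/
def flatten : MForm (MForm ℕ) → MForm ℕ
  | .top => .top
  | .atom φ => φ
  | .neg δ => .neg (flatten δ)
  | .and δ₁ δ₂ => .and (flatten δ₁) (flatten δ₂)
  | .box δ => .box (flatten δ)

/-- `δ ∈ ML(Φ)` is an abstract class identifier (for the Φ-bisimulation class of some
abstract Φ-model for `L = Log Fr`). -/
def IsClassId {ι : Type} (Fr : ι → FFrame) (Φ : Finset (MForm ℕ)) (δ : MForm (MForm ℕ)) : Prop :=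
  ∃ i, ∃ f : (Fr i).W → MForm ℕ, (∀ w, f w ∈ Φ) ∧
    ∀ j, ∀ f' : (Fr j).W → MForm ℕ, (∀ w, f' w ∈ Φ) →
      (asat (Fr j) f' (Fr j).root δ ↔ ABisimRoot (Fr j) f' (Fr i) f)

/-- A σ-encoding for `L = Log Fr`: a set `Γ` of σ-EMEs together with, for each `Φ ∈ Γ`,
a set `Δ Φ` of abstract class identifiers, such that every model based on a frame of the
family has a σ-cover `Φ ∈ Γ` and satisfies some `δ ∈ Δ Φ` at its root. -/
def IsEncoding {ι : Type} (Fr : ι → FFrame) (σ : Finset ℕ)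
    (Γ : Finset (Finset (MForm ℕ))) (Δ : Finset (MForm ℕ) → Finset (MForm (MForm ℕ))) : Prop :=
  (∀ Φ ∈ Γ, IsEME σ Φ) ∧
  (∀ Φ ∈ Γ, ∀ δ ∈ Δ Φ, MForm.sig δ ⊆ Φ ∧ IsClassId Fr Φ δ) ∧
  (∀ i, ∀ V : (Fr i).W → ℕ → Prop, ∃ Φ ∈ Γ, IsCover σ Φ (Fr i) V ∧
    ∃ δ ∈ Δ Φ, sat (Fr i) V (Fr i).root (flatten δ))

/-- `ξ^f`: replace each atom `p_w` by `◇^{≤N}(f(w) ∧ p)`. -/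
def xiSub (N : ℕ) (F : FFrame) (f : F.W → MForm ℕ) (ξ : MForm (ℕ × F.W)) : MForm ℕ :=
  substAtoms (fun pw => dle N (.and (f pw.2) (.atom pw.1))) ξ

/-- The abstract Φ-models on the frame `F` in the class identified by `δ`. -/
noncomputable def fList (F : FFrame) (Φ : Finset (MForm ℕ)) (δ : MForm (MForm ℕ)) :
    List (F.W → MForm ℕ) :=
  (((@Finset.filter (F.W → {x // x ∈ Φ})
      (fun f => asat F (fun w => (f w).1) F.root δ) (Classical.decPred _)
      Finset.univ)).toList).map (fun f w => (f w).1)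

/-- The backward translation `rt_{F,L}`. -/
noncomputable def rt (σ : Finset ℕ) (N : ℕ)
    (Γ : Finset (Finset (MForm ℕ))) (Δ : Finset (MForm ℕ) → Finset (MForm (MForm ℕ)))
    (F : FFrame) (ξ : MForm (ℕ × F.W)) : MForm ℕ :=
  bigAnd (Γ.toList.map (fun Φ =>
    bigAnd ((Δ Φ).toList.map (fun δ =>
      MForm.imp (.and (coverFml σ Φ N) (flatten δ))
        (bigOr ((fList F Φ δ).map (fun f => xiSub N F f ξ)))))))

/-- The forward translation `tr_{F,w}`. -/
noncomputable def tr (F : FFrame) : MForm ℕ → F.W → MForm (ℕ × F.W)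
  | .top, _ => .top
  | .atom p, w => .atom (p, w)
  | .neg φ, w => .neg (tr F φ w)
  | .and φ ψ, w => .and (tr F φ w) (tr F ψ w)
  | .box φ, w =>
      bigAnd (((@Finset.filter _ (F.R w) (Classical.decPred _) Finset.univ).toList).map
        (fun w' => tr F φ w'))

/-- The propositional valuation `v_M` over the atoms `σ_F = σ × W` induced by a model. -/
def vM (F : FFrame) (V : F.W → ℕ → Prop) : ℕ × F.W → Prop := fun pw => V pw.2 pw.1

/-- Uniform propositional `σ'`-interpolant. -/
def UPropInt {β : Type} [DecidableEq β] (σ' : Finset β) (χ ξ : MForm β) : Prop :=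
  ξ.IsProp ∧ ξ.sig ⊆ σ' ∧ PTaut (χ.imp ξ) ∧
    ∀ ψ : MForm β, ψ.IsProp → ψ.sig ∩ χ.sig ⊆ σ' → PTaut (χ.imp ψ) → PTaut (ξ.imp ψ)

/-- Propositional Craig interpolant for a tautological implication. -/
def PCraig {β : Type} [DecidableEq β] (χ₁ χ₂ ξ : MForm β) : Prop :=
  ξ.IsProp ∧ ξ.sig ⊆ χ₁.sig ∩ χ₂.sig ∧ PTaut (χ₁.imp ξ) ∧ PTaut (ξ.imp χ₂)

/-- The logic of a single finite rooted frame. -/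
def Log1 (F : FFrame) : Set (MForm ℕ) :=
  {φ | ∀ V : F.W → ℕ → Prop, sat F V F.root φ}

/-!
(⇐) Given `φ → ψ ∈ L` and `σ = sig φ ∩ sig ψ`, take the disjunction of the depth-`n`
characteristic σ-formulas of the roots of all models of `φ` on the frames `Fᵢ`; there are finitely
many, since only the σ-part of a valuation matters. On finite frames, `n`-bisimilarity for large `n`
is bisimilarity, so a model of this disjunction is σ-bisimilar to a model of `φ`, hence σ-isomorphic
to it; transporting the remaining atoms of `φ` along the isomorphism makes `φ`, and thus `ψ`, true.

(⇒) Name the worlds of two σ-bisimilar models `(Fᵢ, V₁)`, `(Fⱼ, V₂)` by disjoint fresh atoms and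
let `Δ₁`, `Δ₂` be their diagrams. An interpolant of `Δ₁ → ¬Δ₂` would be a σ-formula true at the
first root and false at the second, so some model on a frame `F_k` satisfies `Δ₁ ∧ Δ₂`. Reading
off names gives surjective p-morphisms from `F_k` onto `Fᵢ` and `Fⱼ`; p-morphic images only enlarge
the logic, so reducedness forces `k = i = j`, the two maps are bijections, and their composite is
the required isomorphism of σ-reducts.
-/

open Finset

section Semantics

variable {F : FFrame} {V : F.W → ℕ → Prop} {w : F.W}

lemma sat_imp {φ ψ : MForm ℕ} : sat F V w (φ.imp ψ) ↔ (sat F V w φ → sat F V w ψ) := by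
  simp only [MForm.imp, sat]; tauto

lemma sat_dia {φ : MForm ℕ} : sat F V w φ.dia ↔ ∃ v, F.R w v ∧ sat F V v φ := by
  simp [MForm.dia, sat]

lemma sat_bigAnd_map {β : Type*} (l : List β) (f : β → MForm ℕ) :
    sat F V w (bigAnd (l.map f)) ↔ ∀ x ∈ l, sat F V w (f x) := by
  induction l with
  | nil => simp [bigAnd, sat]
  | cons a l ih => simp [bigAnd, sat, ih]

lemma sat_bigOr_map {β : Type*} (l : List β) (f : β → MForm ℕ) :
    sat F V w (bigOr (l.map f)) ↔ ∃ x ∈ l, sat F V w (f x) := by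
  simp [bigOr, sat, List.map_map, Function.comp_def, sat_bigAnd_map]

lemma sig_bigAnd_map_subset {β : Type*} {l : List β} {f : β → MForm ℕ} {S : Finset ℕ}
    (h : ∀ x ∈ l, (f x).sig ⊆ S) : (bigAnd (l.map f)).sig ⊆ S := by
  induction l with
  | nil => simp [bigAnd, MForm.sig]
  | cons a l ih =>
      simp only [List.map_cons, bigAnd, MForm.sig, union_subset_iff]
      exact ⟨h a (by simp), ih fun x hx => h x (by simp [hx])⟩

lemma sig_bigOr_map_subset {β : Type*} {l : List β} {f : β → MForm ℕ} {S : Finset ℕ}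
    (h : ∀ x ∈ l, (f x).sig ⊆ S) : (bigOr (l.map f)).sig ⊆ S := by
  simp only [bigOr, MForm.sig, List.map_map]
  exact sig_bigAnd_map_subset h

end Semantics

section Bisimulation

variable {σ : Finset ℕ} {F₁ F₂ : FFrame} {V₁ : F₁.W → ℕ → Prop} {V₂ : F₂.W → ℕ → Prop}
  {Z : F₁.W → F₂.W → Prop}

lemma IsBisim.sat_iff (hZ : IsBisim σ F₁ V₁ F₂ V₂ Z) {θ : MForm ℕ} (hθ : θ.sig ⊆ σ) :
    ∀ {w v}, Z w v → (sat F₁ V₁ w θ ↔ sat F₂ V₂ v θ) := by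
  obtain ⟨hatoms, hforth, hback⟩ := hZ
  induction θ with
  | top => simp [sat]
  | atom p => intro w v hwv; exact hatoms w v hwv p (hθ (by simp [MForm.sig]))
  | neg φ ih => intro w v hwv; simp only [sat, ih hθ hwv]
  | and φ ψ ih₁ ih₂ =>
      intro w v hwv
      simp only [MForm.sig, union_subset_iff] at hθ
      simp only [sat, ih₁ hθ.1 hwv, ih₂ hθ.2 hwv]
  | box φ ih =>
      intro w v hwv
      simp only [sat]
      constructor
      · intro h v' hv'
        obtain ⟨w', hw', hZ'⟩ := hback w v v' hwv hv'
        exact (ih hθ hZ').1 (h w' hw')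
      · intro h w' hw'
        obtain ⟨v', hv', hZ'⟩ := hforth w v w' hwv hw'
        exact (ih hθ hZ').2 (h v' hv')

lemma IsBisim.congr {V₁' : F₁.W → ℕ → Prop} {V₂' : F₂.W → ℕ → Prop}
    (hZ : IsBisim σ F₁ V₁ F₂ V₂ Z) (h₁ : ∀ w, ∀ p ∈ σ, (V₁ w p ↔ V₁' w p))
    (h₂ : ∀ v, ∀ p ∈ σ, (V₂ v p ↔ V₂' v p)) : IsBisim σ F₁ V₁' F₂ V₂' Z :=
  ⟨fun w v hwv p hp => (h₁ w p hp).symm.trans ((hZ.1 w v hwv p hp).trans (h₂ v p hp)),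
    hZ.2.1, hZ.2.2⟩

lemma isBisim_eq_of_agree {F : FFrame} {V V' : F.W → ℕ → Prop}
    (h : ∀ w, ∀ p ∈ σ, (V w p ↔ V' w p)) : IsBisim σ F V F V' Eq :=
  ⟨fun w _ hwv p hp => hwv ▸ h w p hp, fun _ _ v hwv hr => ⟨v, hwv ▸ hr, rfl⟩,
    fun _ _ v hwv hr => ⟨v, hwv ▸ hr, rfl⟩⟩

lemma sat_iff_of_agree {F : FFrame} {V V' : F.W → ℕ → Prop} {θ : MForm ℕ}
    (h : ∀ w, ∀ p ∈ θ.sig, (V w p ↔ V' w p)) (w : F.W) : sat F V w θ ↔ sat F V' w θ :=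
  (isBisim_eq_of_agree h).sat_iff subset_rfl rfl

def IsPMorphism (G F : FFrame) (h : G.W → F.W) : Prop :=
  (∀ u u', G.R u u' → F.R (h u) (h u')) ∧ (∀ u v, F.R (h u) v → ∃ u', G.R u u' ∧ h u' = v)

namespace IsPMorphism

variable {G F : FFrame} {h : G.W → F.W}

lemma isBisim (hh : IsPMorphism G F h) {U : G.W → ℕ → Prop} {V : F.W → ℕ → Prop}
    (hV : ∀ u, ∀ p ∈ σ, (U u p ↔ V (h u) p)) : IsBisim σ G U F V (fun u w => h u = w) :=
  ⟨fun u _ hu p hp => hu ▸ hV u p hp, fun u _ u' hu hr => ⟨h u', hu ▸ hh.1 u u' hr, rfl⟩,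
    fun u _ v hu hr => hh.2 u v (hu ▸ hr)⟩

lemma log1_subset (hh : IsPMorphism G F h) (hroot : h G.root = F.root) : Log1 G ⊆ Log1 F := by
  intro θ hθ V
  rw [← hroot]
  exact ((hh.isBisim (σ := θ.sig) (fun _ _ _ => Iff.rfl)).sat_iff subset_rfl rfl).1
    (hθ fun u => V (h u))

lemma surjective (hh : IsPMorphism G F h) (hroot : h G.root = F.root) :
    Function.Surjective h := by
  intro w
  induction F.rooted w with
  | refl => exact ⟨G.root, hroot⟩
  | tail _ hr ih =>
      obtain ⟨u, rfl⟩ := ih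
      obtain ⟨u', -, hu'⟩ := hh.2 u _ hr
      exact ⟨u', hu'⟩

lemma rel_iff (hh : IsPMorphism G F h) (hinj : Function.Injective h) (u u' : G.W) :
    G.R u u' ↔ F.R (h u) (h u') :=
  ⟨hh.1 u u', fun hr => by
    obtain ⟨u'', hu'', heq⟩ := hh.2 u _ hr
    rwa [← hinj heq]⟩

end IsPMorphism

lemma isPMorphism_of_equiv {F G : FFrame} (g : F.W ≃ G.W)
    (hR : ∀ a b, F.R a b ↔ G.R (g a) (g b)) : IsPMorphism F G g :=
  ⟨fun a b => (hR a b).1, fun a v hr => ⟨g.symm v, by rwa [hR, g.apply_symm_apply], by simp⟩⟩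

end Bisimulation

section BoundedReach

def FFrame.ReachIn (F : FFrame) : ℕ → F.W → F.W → Prop
  | 0, w, u => w = u
  | n + 1, w, u => ∃ v, F.R w v ∧ F.ReachIn n v u

lemma FFrame.ReachIn.tail {F : FFrame} :
    ∀ {n : ℕ} {w u v : F.W}, F.ReachIn n w u → F.R u v → F.ReachIn (n + 1) w v
  | 0, _, _, v, rfl, hr => ⟨v, hr, rfl⟩
  | _ + 1, _, _, _, ⟨x, hx, hs⟩, hr => ⟨x, hx, hs.tail hr⟩

variable {F : FFrame} {V : F.W → ℕ → Prop}

lemma sat_boxIter {θ : MForm ℕ} :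
    ∀ (k : ℕ) (w : F.W), sat F V w (boxIter k θ) ↔ ∀ u, F.ReachIn k w u → sat F V u θ
  | 0, w => by simp [boxIter, FFrame.ReachIn]
  | k + 1, w => by
      simp only [boxIter, sat, FFrame.ReachIn, sat_boxIter k]
      grind

lemma sat_ble {θ : MForm ℕ} {d : ℕ} {w : F.W} :
    sat F V w (ble d θ) ↔ ∀ k ≤ d, ∀ u, F.ReachIn k w u → sat F V u θ := by
  simp only [ble, sat_bigAnd_map, List.mem_range, sat_boxIter, Nat.lt_succ_iff]

lemma sig_ble_subset (θ : MForm ℕ) (d : ℕ) : (ble d θ).sig ⊆ θ.sig := by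
  refine sig_bigAnd_map_subset fun k hk => ?_
  clear hk
  induction k with
  | zero => rfl
  | succ k ih => exact ih

lemma Finset.exists_le_card_eq_succ_of_monotone {α : Type*} [Fintype α] (c : ℕ → Finset α)
    (mono : ∀ n, c n ⊆ c (n + 1)) : ∃ m ≤ Fintype.card α, c m = c (m + 1) := by
  by_contra! h
  have grow : ∀ m ≤ Fintype.card α + 1, m ≤ #(c m) := by
    intro m hm
    induction m with
    | zero => omega
    | succ k ih =>
        have := card_lt_card ((mono k).ssubset_of_ne (h k (by omega)))
        have := ih (by omega)
        omega
  have := card_le_univ (c (Fintype.card α + 1))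
  have := grow _ le_rfl
  omega

lemma FFrame.exists_reachIn_le_card (F : FFrame) (u : F.W) :
    ∃ k ≤ Fintype.card F.W, F.ReachIn k F.root u := by
  classical
  let S : ℕ → Finset F.W := fun n => univ.filter fun u => ∃ k ≤ n, F.ReachIn k F.root u
  have hS : ∀ n u, u ∈ S n ↔ ∃ k ≤ n, F.ReachIn k F.root u := by simp [S]
  obtain ⟨m, hm, hstable⟩ := Finset.exists_le_card_eq_succ_of_monotone S fun n u hu => by
    obtain ⟨k, hk, hs⟩ := (hS n u).1 hu
    exact (hS _ u).2 ⟨k, by omega, hs⟩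
  have hclosed : ∀ x, Relation.ReflTransGen F.R F.root x → x ∈ S m := by
    intro x hx
    induction hx with
    | refl => exact (hS m _).2 ⟨0, by omega, rfl⟩
    | tail _ hr ih =>
        obtain ⟨k, hk, hs⟩ := (hS m _).1 ih
        rw [hstable]
        exact (hS _ _).2 ⟨k + 1, by omega, hs.tail hr⟩
  obtain ⟨k, hk, hs⟩ := (hS m u).1 (hclosed u (F.rooted u))
  exact ⟨k, by omega, hs⟩

def maxCard {ι : Type} [Fintype ι] (Fr : ι → FFrame) : ℕ :=
  univ.sup fun i => Fintype.card (Fr i).W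

lemma card_le_maxCard {ι : Type} [Fintype ι] (Fr : ι → FFrame) (i : ι) :
    Fintype.card (Fr i).W ≤ maxCard Fr :=
  le_sup (f := fun i => Fintype.card (Fr i).W) (mem_univ i)

end BoundedReach

section CharacteristicFormulas

open scoped Classical in
noncomputable def literals (σ : Finset ℕ) (a : ℕ → Prop) : MForm ℕ :=
  bigAnd (σ.toList.map fun p => if a p then .atom p else .neg (.atom p))

/-- The cover formula `∇ {c v | w R v}`. -/
noncomputable def nabla (F : FFrame) (w : F.W) (c : F.W → MForm ℕ) : MForm ℕ :=
  letI := Classical.decPred (F.R w)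
  .and (bigAnd ((univ.filter (F.R w)).toList.map fun v => (c v).dia))
    (.box (bigOr ((univ.filter (F.R w)).toList.map c)))

variable {σ : Finset ℕ} {G : FFrame} {U : G.W → ℕ → Prop} {u : G.W}

lemma sat_literals {a : ℕ → Prop} : sat G U u (literals σ a) ↔ ∀ p ∈ σ, (a p ↔ U u p) := by
  classical
  simp only [literals, sat_bigAnd_map, mem_toList]
  refine forall₂_congr fun p _ => ?_
  split_ifs with hp <;> simp [sat, hp]

lemma sig_literals_subset (a : ℕ → Prop) : (literals σ a).sig ⊆ σ := by
  refine sig_bigAnd_map_subset fun p hp => ?_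
  split_ifs <;> simpa [MForm.sig] using hp

lemma sat_nabla {F : FFrame} {w : F.W} {c : F.W → MForm ℕ} :
    sat G U u (nabla F w c) ↔
      (∀ v, F.R w v → ∃ u', G.R u u' ∧ sat G U u' (c v)) ∧
      (∀ u', G.R u u' → ∃ v, F.R w v ∧ sat G U u' (c v)) := by
  simp [nabla, sat, sat_bigAnd_map, sat_bigOr_map, sat_dia]

lemma sig_nabla_subset {F : FFrame} {w : F.W} {c : F.W → MForm ℕ} {S : Finset ℕ}
    (h : ∀ v, (c v).sig ⊆ S) : (nabla F w c).sig ⊆ S :=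
  union_subset (sig_bigAnd_map_subset fun v _ => h v) (sig_bigOr_map_subset fun v _ => h v)

def NBisim (σ : Finset ℕ) (F₁ : FFrame) (V₁ : F₁.W → ℕ → Prop) (F₂ : FFrame)
    (V₂ : F₂.W → ℕ → Prop) : ℕ → F₁.W → F₂.W → Prop
  | 0, w, v => ∀ p ∈ σ, (V₁ w p ↔ V₂ v p)
  | n + 1, w, v => (∀ p ∈ σ, (V₁ w p ↔ V₂ v p)) ∧
      (∀ w', F₁.R w w' → ∃ v', F₂.R v v' ∧ NBisim σ F₁ V₁ F₂ V₂ n w' v') ∧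
      (∀ v', F₂.R v v' → ∃ w', F₁.R w w' ∧ NBisim σ F₁ V₁ F₂ V₂ n w' v')

namespace NBisim

variable {F₁ F₂ : FFrame} {V₁ : F₁.W → ℕ → Prop} {V₂ : F₂.W → ℕ → Prop}

lemma atoms : ∀ {n : ℕ} {w : F₁.W} {v : F₂.W}, NBisim σ F₁ V₁ F₂ V₂ n w v →
    ∀ p ∈ σ, (V₁ w p ↔ V₂ v p)
  | 0, _, _, h => h
  | _ + 1, _, _, h => h.1

lemma of_succ : ∀ {n : ℕ} {w : F₁.W} {v : F₂.W},
    NBisim σ F₁ V₁ F₂ V₂ (n + 1) w v → NBisim σ F₁ V₁ F₂ V₂ n w v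
  | 0, _, _, h => h.1
  | _ + 1, _, _, ⟨ha, hf, hb⟩ =>
      ⟨ha, fun w' hw' => (hf w' hw').imp fun _ h => ⟨h.1, of_succ h.2⟩,
        fun v' hv' => (hb v' hv').imp fun _ h => ⟨h.1, of_succ h.2⟩⟩

lemma mono {m n : ℕ} (hmn : m ≤ n) {w : F₁.W} {v : F₂.W}
    (h : NBisim σ F₁ V₁ F₂ V₂ n w v) : NBisim σ F₁ V₁ F₂ V₂ m w v := by
  induction n, hmn using Nat.le_induction with
  | base => exact h
  | succ n _ ih => exact ih h.of_succ

lemma of_isBisim {Z : F₁.W → F₂.W → Prop} (hZ : IsBisim σ F₁ V₁ F₂ V₂ Z) :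
    ∀ (n : ℕ) {w : F₁.W} {v : F₂.W}, Z w v → NBisim σ F₁ V₁ F₂ V₂ n w v
  | 0, _, _, hwv => hZ.1 _ _ hwv
  | n + 1, w, v, hwv =>
      ⟨hZ.1 _ _ hwv,
        fun w' hw' => (hZ.2.1 w v w' hwv hw').imp fun _ h => ⟨h.1, of_isBisim hZ n h.2⟩,
        fun v' hv' => (hZ.2.2 w v v' hwv hv').imp fun _ h => ⟨h.1, of_isBisim hZ n h.2⟩⟩

/-- On finite frames, `n`-bisimilarity stabilises after `card (W₁ × W₂)` rounds and is then a
bisimulation. -/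
lemma bisim {n : ℕ} (hn : Fintype.card (F₁.W × F₂.W) ≤ n) {w : F₁.W} {v : F₂.W}
    (h : NBisim σ F₁ V₁ F₂ V₂ n w v) : Bisim σ F₁ V₁ w F₂ V₂ v := by
  classical
  let E : ℕ → Finset (F₁.W × F₂.W) := fun n => univ.filter fun x => ¬ NBisim σ F₁ V₁ F₂ V₂ n x.1 x.2
  obtain ⟨m, hm, hstable⟩ := Finset.exists_le_card_eq_succ_of_monotone E fun n x => by
    simpa [E] using mt of_succ
  have hsucc : ∀ {a b}, NBisim σ F₁ V₁ F₂ V₂ m a b → NBisim σ F₁ V₁ F₂ V₂ (m + 1) a b := by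
    intro a b hab
    by_contra hc
    have : (a, b) ∈ E (m + 1) := by simpa [E] using hc
    rw [← hstable] at this
    exact (mem_filter.1 this).2 hab
  exact ⟨NBisim σ F₁ V₁ F₂ V₂ m, ⟨fun _ _ => atoms, fun _ _ _ hab => (hsucc hab).2.1 _,
    fun _ _ _ hab => (hsucc hab).2.2 _⟩, h.mono (by omega)⟩

end NBisim

noncomputable def charFormula (σ : Finset ℕ) (F : FFrame) (V : F.W → ℕ → Prop) :
    ℕ → F.W → MForm ℕ
  | 0, w => literals σ (V w)
  | n + 1, w => .and (literals σ (V w)) (nabla F w (charFormula σ F V n))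

lemma sig_charFormula_subset (F : FFrame) (V : F.W → ℕ → Prop) :
    ∀ (n : ℕ) (w : F.W), (charFormula σ F V n w).sig ⊆ σ
  | 0, _ => sig_literals_subset _
  | n + 1, _ => union_subset (sig_literals_subset _)
      (sig_nabla_subset (sig_charFormula_subset F V n))

lemma sat_charFormula_iff (F : FFrame) (V : F.W → ℕ → Prop) :
    ∀ (n : ℕ) (w : F.W) {u : G.W}, sat G U u (charFormula σ F V n w) ↔ NBisim σ F V G U n w u
  | 0, _, _ => sat_literals
  | n + 1, w, u => by
      simp only [charFormula, sat, sat_literals, sat_nabla, sat_charFormula_iff F V n, NBisim]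

end CharacteristicFormulas

section Interpolation

variable {ι : Type} [Fintype ι] (Fr : ι → FFrame)

/-- A finite encoding of the σ-part of a valuation. -/
abbrev SigmaVal (σ : Finset ℕ) (F : FFrame) : Type := F.W → σ.powerset

def SigmaVal.val {σ : Finset ℕ} {F : FFrame} (f : SigmaVal σ F) : F.W → ℕ → Prop :=
  fun w p => p ∈ (f w).1

open scoped Classical in
noncomputable def interpolant (σ : Finset ℕ) (n : ℕ) (φ : MForm ℕ) : MForm ℕ :=
  bigOr ((univ.filter fun x : Σ i, SigmaVal σ (Fr i) => ∃ V, sat (Fr x.1) V (Fr x.1).root φ ∧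
      ∀ w, ∀ p ∈ σ, (V w p ↔ x.2.val w p)).toList.map
    fun x => charFormula σ (Fr x.1) x.2.val n (Fr x.1).root)

lemma sat_of_iso {F₁ F₂ : FFrame} {V₁ : F₁.W → ℕ → Prop} {V₂ : F₂.W → ℕ → Prop}
    {φ ψ : MForm ℕ} (hL : φ.imp ψ ∈ Log1 F₂) (g : F₁.W ≃ F₂.W) (hroot : g F₁.root = F₂.root)
    (hR : ∀ a b, F₁.R a b ↔ F₂.R (g a) (g b))
    (hV : ∀ w, ∀ p ∈ φ.sig ∩ ψ.sig, (V₁ w p ↔ V₂ (g w) p)) (hφ : sat F₁ V₁ F₁.root φ) :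
    sat F₂ V₂ F₂.root ψ := by
  classical
  let V : F₂.W → ℕ → Prop := fun v p => if p ∈ φ.sig then V₁ (g.symm v) p else V₂ v p
  have hφV : sat F₂ V F₂.root φ := by
    rw [← hroot]
    refine ((isPMorphism_of_equiv g hR).isBisim (σ := φ.sig) fun w p hp => ?_).sat_iff
      subset_rfl rfl |>.1 hφ
    simp [V, hp]
  refine (sat_iff_of_agree (fun v p hp => ?_) _).1 (sat_imp.1 (hL V) hφV)
  by_cases hpφ : p ∈ φ.sig
  · simpa [V, hpφ] using hV (g.symm v) p (mem_inter.2 ⟨hpφ, hp⟩)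
  · simp [V, hpφ]

lemma hasCIP_of_bisim_imp_iso
    (hiso : ∀ (σ : Finset ℕ) (i j : ι) (V₁ : (Fr i).W → ℕ → Prop) (V₂ : (Fr j).W → ℕ → Prop),
        Bisim σ (Fr i) V₁ (Fr i).root (Fr j) V₂ (Fr j).root →
        i = j ∧ ∃ g : (Fr i).W ≃ (Fr j).W, g (Fr i).root = (Fr j).root ∧
          (∀ a b : (Fr i).W, (Fr i).R a b ↔ (Fr j).R (g a) (g b)) ∧
          (∀ w : (Fr i).W, ∀ p ∈ σ, (V₁ w p ↔ V₂ (g w) p))) :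
    HasCIP (Log Fr) := by
  classical
  intro φ ψ himp
  set σ := φ.sig ∩ ψ.sig
  set n := maxCard Fr * maxCard Fr
  refine ⟨interpolant Fr σ n φ, fun i V => sat_imp.2 fun hφ => ?_,
    fun j V₂ => sat_imp.2 fun hχ => ?_,
    sig_bigOr_map_subset fun x _ => sig_charFormula_subset _ _ n _⟩
  · let f : SigmaVal σ (Fr i) := fun w => ⟨σ.filter (V w), mem_powerset.2 (filter_subset _ _)⟩
    have hf : ∀ w, ∀ p ∈ σ, (V w p ↔ f.val w p) := fun w p hp => by
      simp [f, SigmaVal.val, hp]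
    refine (sat_bigOr_map _ _).2 ⟨⟨i, f⟩, by simpa using ⟨V, hφ, hf⟩, ?_⟩
    exact (sat_charFormula_iff _ _ _ _).2
      (NBisim.of_isBisim (isBisim_eq_of_agree fun w p hp => (hf w p hp).symm) n rfl)
  · obtain ⟨⟨i, f⟩, hx, hsat⟩ := (sat_bigOr_map _ _).1 hχ
    obtain ⟨V₁, hφ, hf⟩ := by simpa using hx
    have hcard : Fintype.card ((Fr i).W × (Fr j).W) ≤ n := by
      rw [Fintype.card_prod]
      exact Nat.mul_le_mul (card_le_maxCard Fr i) (card_le_maxCard Fr j)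
    obtain ⟨Z, hZ, hroot⟩ := ((sat_charFormula_iff _ _ _ _).1 hsat).bisim hcard
    obtain ⟨-, g, hg⟩ := hiso σ i j V₁ V₂
      ⟨Z, hZ.congr (fun w p hp => (hf w p hp).symm) fun _ _ _ => Iff.rfl, hroot⟩
    exact sat_of_iso (himp j) g hg.1 hg.2.1 hg.2.2 hφ

end Interpolation

section Diagrams

variable (σ : Finset ℕ) (F : FFrame) (V : F.W → ℕ → Prop) (ν : F.W → ℕ)

noncomputable def localDiagram (w : F.W) : MForm ℕ :=
  .and (bigAnd ((univ.erase w).toList.map fun w' => .neg (.atom (ν w'))))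
    (.and (literals σ (V w)) (nabla F w fun v => .atom (ν v)))

noncomputable def diagramStep : MForm ℕ :=
  .and (bigOr (univ.toList.map fun w => .atom (ν w)))
    (bigAnd (univ.toList.map fun w => MForm.imp (.atom (ν w)) (localDiagram σ F V ν w)))

noncomputable def diagram (d : ℕ) : MForm ℕ :=
  .and (.atom (ν F.root)) (ble d (diagramStep σ F V ν))

variable {σ F V ν} {G : FFrame} {U : G.W → ℕ → Prop} {u : G.W}

lemma sat_localDiagram {w : F.W} :
    sat G U u (localDiagram σ F V ν w) ↔ (∀ w' ≠ w, ¬ U u (ν w')) ∧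
      (∀ p ∈ σ, (V w p ↔ U u p)) ∧
      (∀ v, F.R w v → ∃ u', G.R u u' ∧ U u' (ν v)) ∧
      (∀ u', G.R u u' → ∃ v, F.R w v ∧ U u' (ν v)) := by
  simp [localDiagram, sat, sat_bigAnd_map, sat_literals, sat_nabla]

lemma sat_diagramStep :
    sat G U u (diagramStep σ F V ν) ↔ (∃ w, U u (ν w)) ∧
      ∀ w, U u (ν w) → sat G U u (localDiagram σ F V ν w) := by
  simp [diagramStep, sat, sat_bigAnd_map, sat_bigOr_map, sat_imp]

lemma sig_diagram_subset (d : ℕ) :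
    (diagram σ F V ν d).sig ⊆ σ ∪ univ.image ν := by
  have hν : ∀ w, (MForm.atom (ν w)).sig ⊆ σ ∪ univ.image ν := fun w => by simp [MForm.sig]
  have hloc : ∀ w, (localDiagram σ F V ν w).sig ⊆ σ ∪ univ.image ν := fun w =>
    union_subset (sig_bigAnd_map_subset fun w' _ => hν w')
      (union_subset ((sig_literals_subset _).trans subset_union_left) (sig_nabla_subset hν))
  refine union_subset (hν _) ((sig_ble_subset _ d).trans (union_subset
    (sig_bigOr_map_subset fun w _ => hν w) (sig_bigAnd_map_subset fun w _ => ?_)))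
  exact union_subset (hν w) (hloc w)

def namingVal (V : F.W → ℕ → Prop) (ν : F.W → ℕ) : F.W → ℕ → Prop :=
  fun w q => q = ν w ∨ (q ∉ Set.range ν ∧ V w q)

lemma namingVal_name (hν : Function.Injective ν) {w w' : F.W} :
    namingVal V ν w (ν w') ↔ w' = w := by
  simp [namingVal, hν.eq_iff]

lemma namingVal_of_notMem (hfresh : ∀ w, ν w ∉ σ) {w : F.W} {p : ℕ} (hp : p ∈ σ) :
    namingVal V ν w p ↔ V w p := by
  have : p ∉ Set.range ν := by rintro ⟨w', rfl⟩; exact hfresh w' hp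
  simp [namingVal, this, show p ≠ ν w from fun h => hfresh w (h ▸ hp)]

lemma sat_diagram_namingVal (hν : Function.Injective ν) (hfresh : ∀ w, ν w ∉ σ) (d : ℕ) :
    sat F (namingVal V ν) F.root (diagram σ F V ν d) := by
  refine ⟨(namingVal_name hν).2 rfl, sat_ble.2 fun _ _ u _ => sat_diagramStep.2
    ⟨⟨u, (namingVal_name hν).2 rfl⟩, fun w hw => ?_⟩⟩
  obtain rfl := (namingVal_name hν).1 hw
  refine sat_localDiagram.2 ⟨fun w' hw' h => hw' ((namingVal_name hν).1 h),
    fun p hp => (namingVal_of_notMem hfresh hp).symm, fun v hv => ⟨v, hv, ?_⟩,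
    fun u' hu' => ⟨u', hu', ?_⟩⟩ <;> exact (namingVal_name hν).2 rfl

/-- Each world of `G` is sent to the unique world it is named after. -/
lemma exists_isPMorphism_of_sat_diagram {d : ℕ} (hd : Fintype.card G.W ≤ d)
    (hsat : sat G U G.root (diagram σ F V ν d)) :
    ∃ h : G.W → F.W, IsPMorphism G F h ∧ h G.root = F.root ∧
      ∀ u, ∀ p ∈ σ, (U u p ↔ V (h u) p) := by
  obtain ⟨hroot, hall⟩ := hsat
  have hstep : ∀ u, sat G U u (diagramStep σ F V ν) := fun u => by
    obtain ⟨k, hk, hs⟩ := G.exists_reachIn_le_card u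
    exact sat_ble.1 hall k (hk.trans hd) u hs
  choose h hh using fun u => (sat_diagramStep.1 (hstep u)).1
  have hloc : ∀ u, sat G U u (localDiagram σ F V ν (h u)) := fun u =>
    (sat_diagramStep.1 (hstep u)).2 _ (hh u)
  have hname : ∀ {u w}, U u (ν w) → h u = w := fun {u w} hw => by
    by_contra hne
    exact (sat_localDiagram.1 (hloc u)).1 w (Ne.symm hne) hw
  refine ⟨h, ⟨fun u u' hr => ?_, fun u v hr => ?_⟩, hname hroot,
    fun u p hp => ((sat_localDiagram.1 (hloc u)).2.1 p hp).symm⟩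
  · obtain ⟨v, hv, hu'⟩ := (sat_localDiagram.1 (hloc u)).2.2.2 u' hr
    rwa [hname hu']
  · obtain ⟨u', hu', hv⟩ := (sat_localDiagram.1 (hloc u)).2.2.1 v hr
    exact ⟨u', hu', hname hv⟩

end Diagrams

section CIPImpliesIso

lemma exists_injective_avoiding (σ : Finset ℕ) (A : Type) [Finite A] :
    ∃ ν : A → ℕ, Function.Injective ν ∧ ∀ a, ν a ∉ σ := by
  obtain ⟨f, hf⟩ := Countable.exists_injective_nat A
  let e := σ.finite_toSet.infinite_compl.natEmbedding
  exact ⟨fun a => e (f a), Subtype.val_injective.comp (e.injective.comp hf), fun a => (e (f a)).2⟩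

variable {ι : Type} {Fr : ι → FFrame} {σ : Finset ℕ} {i j : ι}
  {V₁ : (Fr i).W → ℕ → Prop} {V₂ : (Fr j).W → ℕ → Prop}

/-- If no model satisfied both diagrams, an interpolant of `Δ₁ → ¬Δ₂` would be a σ-formula
separating the two σ-bisimilar roots. -/
lemma exists_sat_diagrams_of_hasCIP (hC : HasCIP (Log Fr))
    (hb : Bisim σ (Fr i) V₁ (Fr i).root (Fr j) V₂ (Fr j).root)
    {ν₁ : (Fr i).W → ℕ} {ν₂ : (Fr j).W → ℕ} (hν₁ : Function.Injective ν₁)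
    (hν₂ : Function.Injective ν₂) (hfresh₁ : ∀ w, ν₁ w ∉ σ) (hfresh₂ : ∀ v, ν₂ v ∉ σ)
    (hdisj : ∀ w v, ν₁ w ≠ ν₂ v) (d : ℕ) :
    ∃ k, ∃ U : (Fr k).W → ℕ → Prop, sat (Fr k) U (Fr k).root (diagram σ (Fr i) V₁ ν₁ d) ∧
      sat (Fr k) U (Fr k).root (diagram σ (Fr j) V₂ ν₂ d) := by
  by_contra! h
  obtain ⟨χ, h₁χ, hχ₂, hsig⟩ := hC (diagram σ (Fr i) V₁ ν₁ d)
    (.neg (diagram σ (Fr j) V₂ ν₂ d)) fun k U => sat_imp.2 (h k U)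
  have hχσ : χ.sig ⊆ σ := by
    intro p hp
    have h₁ := sig_diagram_subset d (mem_inter.1 (hsig hp)).1
    have h₂ := sig_diagram_subset d (mem_inter.1 (hsig hp)).2
    simp only [mem_union, mem_image, mem_univ, true_and] at h₁ h₂
    obtain h₁ | ⟨w, rfl⟩ := h₁
    · exact h₁
    obtain h₂ | ⟨v, hv⟩ := h₂
    · exact h₂
    exact absurd hv.symm (hdisj w v)
  obtain ⟨Z, hZ, hroot⟩ := hb
  have hnamed := (hZ.congr (fun w p hp => (namingVal_of_notMem hfresh₁ hp).symm)
    fun v p hp => (namingVal_of_notMem hfresh₂ hp).symm).sat_iff hχσ hroot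
  exact sat_imp.1 (hχ₂ j _) (hnamed.1 (sat_imp.1 (h₁χ i _) (sat_diagram_namingVal hν₁ hfresh₁ d)))
    (sat_diagram_namingVal hν₂ hfresh₂ d)

lemma exists_iso_of_bijective_isPMorphisms {G F₁ F₂ : FFrame} {U : G.W → ℕ → Prop}
    {V₁ : F₁.W → ℕ → Prop} {V₂ : F₂.W → ℕ → Prop} {h₁ : G.W → F₁.W} {h₂ : G.W → F₂.W}
    (hp₁ : IsPMorphism G F₁ h₁) (hp₂ : IsPMorphism G F₂ h₂) (hb₁ : Function.Bijective h₁)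
    (hb₂ : Function.Bijective h₂) (hr₁ : h₁ G.root = F₁.root) (hr₂ : h₂ G.root = F₂.root)
    (hV₁ : ∀ u, ∀ p ∈ σ, (U u p ↔ V₁ (h₁ u) p)) (hV₂ : ∀ u, ∀ p ∈ σ, (U u p ↔ V₂ (h₂ u) p)) :
    ∃ g : F₁.W ≃ F₂.W, g F₁.root = F₂.root ∧ (∀ a b, F₁.R a b ↔ F₂.R (g a) (g b)) ∧
      ∀ w, ∀ p ∈ σ, (V₁ w p ↔ V₂ (g w) p) := by
  let e₁ := Equiv.ofBijective h₁ hb₁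
  let e₂ := Equiv.ofBijective h₂ hb₂
  have he₁ : ∀ u, e₁.symm (h₁ u) = u := Equiv.ofBijective_symm_apply_apply h₁ hb₁
  refine ⟨e₁.symm.trans e₂, ?_, fun a b => ?_, fun w p hp => ?_⟩
  · simp [e₂, ← hr₁, he₁, hr₂]
  · obtain ⟨u, rfl⟩ := hb₁.2 a
    obtain ⟨u', rfl⟩ := hb₁.2 b
    simp [e₂, he₁, ← hp₁.rel_iff hb₁.1, ← hp₂.rel_iff hb₂.1]
  · obtain ⟨u, rfl⟩ := hb₁.2 w
    simpa [e₂, he₁] using (hV₁ u p hp).symm.trans (hV₂ u p hp)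

lemma iso_of_hasCIP [Fintype ι] (hred : ∀ i j : ι, i ≠ j → ¬ (Log1 (Fr i) ⊆ Log1 (Fr j)))
    (hC : HasCIP (Log Fr)) (hb : Bisim σ (Fr i) V₁ (Fr i).root (Fr j) V₂ (Fr j).root) :
    i = j ∧ ∃ g : (Fr i).W ≃ (Fr j).W, g (Fr i).root = (Fr j).root ∧
      (∀ a b : (Fr i).W, (Fr i).R a b ↔ (Fr j).R (g a) (g b)) ∧
      (∀ w : (Fr i).W, ∀ p ∈ σ, (V₁ w p ↔ V₂ (g w) p)) := by
  obtain ⟨ν, hν, hfresh⟩ := exists_injective_avoiding σ ((Fr i).W ⊕ (Fr j).W)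
  obtain ⟨k, U, hsat₁, hsat₂⟩ := exists_sat_diagrams_of_hasCIP hC hb
    (hν.comp Sum.inl_injective) (hν.comp Sum.inr_injective) (fun _ => hfresh _)
    (fun _ => hfresh _) (fun _ _ h => Sum.inl_ne_inr (hν h)) (maxCard Fr)
  obtain ⟨h₁, hp₁, hr₁, hV₁⟩ := exists_isPMorphism_of_sat_diagram (card_le_maxCard Fr k) hsat₁
  obtain ⟨h₂, hp₂, hr₂, hV₂⟩ := exists_isPMorphism_of_sat_diagram (card_le_maxCard Fr k) hsat₂
  have hki : k = i := by_contra fun hki => hred k i hki (hp₁.log1_subset hr₁)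
  have hkj : k = j := by_contra fun hkj => hred k j hkj (hp₂.log1_subset hr₂)
  subst hki hkj
  exact ⟨rfl, exists_iso_of_bijective_isPMorphisms hp₁ hp₂
    (hp₁.surjective hr₁).bijective_of_finite (hp₂.surjective hr₂).bijective_of_finite
    hr₁ hr₂ hV₁ hV₂⟩

end CIPImpliesIso

/-- for a tabular quasi-normal logic `L = Log Fr` given by a reduced finite
family of finite rooted frames, `L` has CIP iff for every signature `σ`, any two models
based on frames of the family whose roots are σ-bisimilar have isomorphic σ-reducts
(in particular they are based on the same frame). -/
theorem stmt12 {ι : Type} [Fintype ι] (Fr : ι → FFrame)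
    (hred : ∀ i j : ι, i ≠ j → ¬ (Log1 (Fr i) ⊆ Log1 (Fr j))) :
    HasCIP (Log Fr) ↔
      ∀ (σ : Finset ℕ) (i j : ι) (V₁ : (Fr i).W → ℕ → Prop) (V₂ : (Fr j).W → ℕ → Prop),
        Bisim σ (Fr i) V₁ (Fr i).root (Fr j) V₂ (Fr j).root →
        i = j ∧
        ∃ g : (Fr i).W ≃ (Fr j).W,
          g (Fr i).root = (Fr j).root ∧
          (∀ a b : (Fr i).W, (Fr i).R a b ↔ (Fr j).R (g a) (g b)) ∧
          (∀ w : (Fr i).W, ∀ p ∈ σ, (V₁ w p ↔ V₂ (g w) p)) :=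
  ⟨fun hC _ _ _ _ _ hb => iso_of_hasCIP hred hC hb, hasCIP_of_bisim_imp_iso Fr⟩
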